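/- Let k⟨X⟩ be Z^s-graded with every generator of total degree 1, G a set of homogeneous polynomials, A = k⟨X⟩/(G), and τ a graded algebra automorphism of k⟨X⟩ with τ(G) ⊆ (G), inducing an automorphism τ̄ of A. Then the twisted algebra A^{τ̄} is isomorphic as a Z^s-graded algebra to k⟨X⟩/(φ_{τ^{-1}}(G)), where φ_{τ^{-1}}: k⟨X⟩ → k⟨X⟩^{τ^{-1}} is the algebra homomorphism sending each generator x_i to x_i. -/

import Mathlib

namespace NC

/-- The free associative algebra on the alphabet `X`, with the words (the free
monoid on `X`) as a basis. -/
abbrev FA (k X : Type) [Field k] := MonoidAlgebra k (FreeMonoid X)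

variable {k X : Type} [Field k]

/-- The monomial on a word `u` (with coefficient `1`). -/
noncomputable def mono (k : Type) [Field k] {X : Type} (u : FreeMonoid X) : FA k X :=
  MonoidAlgebra.of k (FreeMonoid X) u

/-- `u` is a factor of `v`. -/
def IsFactor (u v : FreeMonoid X) : Prop := ∃ w₁ w₂ : FreeMonoid X, w₁ * u * w₂ = v

/-- The leading word of a polynomial (junk value `1` for the zero polynomial). -/
noncomputable def lw [LinearOrder (FreeMonoid X)] (f : FA k X) : FreeMonoid X :=
  f.coeff.support.max.unbotD 1

/-- The set of leading words of the nonzero members of `G`. -/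
def lwSet [LinearOrder (FreeMonoid X)] (G : Set (FA k X)) : Set (FreeMonoid X) :=
  {u | ∃ f ∈ G, f ≠ 0 ∧ lw f = u}

/-- The normal words modulo `G` : words having no factor among the leading words of `G`. -/
def nw [LinearOrder (FreeMonoid X)] (G : Set (FA k X)) : Set (FreeMonoid X) :=
  {u | ∀ v ∈ lwSet G, ¬ IsFactor v u}

/-- The two-sided ideal (as a `k`-submodule) generated by a set `S`. -/
noncomputable def ideal2 (k : Type) [Field k] {X : Type} (S : Set (FA k X)) : Submodule k (FA k X) :=
  Submodule.span k {x | ∃ a s b, s ∈ S ∧ x = a * s * b}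

/-- A `k`-submodule of the free algebra which is a two-sided ideal. -/
def IsTwoSided (𝔞 : Submodule k (FA k X)) : Prop :=
  ∀ a x : FA k X, x ∈ 𝔞 → a * x ∈ 𝔞 ∧ x * a ∈ 𝔞

/-- `G` is a Gröbner basis of the (two-sided) ideal `𝔞`. -/
def IsGrobner [LinearOrder (FreeMonoid X)] (𝔞 : Submodule k (FA k X))
    (G : Set (FA k X)) : Prop :=
  (∀ g ∈ G, g ∈ 𝔞) ∧ ∀ f ∈ 𝔞, f ≠ 0 → lw f ∉ nw G

/-- `G` is reduced: every member is monic and normal modulo the remaining members. -/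
def IsReducedGB [LinearOrder (FreeMonoid X)] (G : Set (FA k X)) : Prop :=
  ∀ f ∈ G, f.coeff (lw f) = 1 ∧ ∀ u ∈ f.coeff.support, u ∈ nw (G \ {f})

/-- The fixed linear order on words is admissible. -/
def IsAdmissible (X : Type) [LinearOrder (FreeMonoid X)] : Prop :=
  WellFoundedLT (FreeMonoid X) ∧ (∀ u : FreeMonoid X, u ≠ 1 → 1 < u) ∧
    ∀ u v w₁ w₂ : FreeMonoid X, u < v → w₁ * u * w₂ < w₁ * v * w₂

end NC

namespace NC2
open NC
variable {k X : Type} [Field k]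

/-- The (multi)degree of a word, for the grading determined by `e` on the letters. -/
def mdeg {σ : Type} [AddCommMonoid σ] (e : X → σ) (w : FreeMonoid X) : σ :=
  ((FreeMonoid.toList w).map e).sum

/-- `f` is homogeneous of degree `α`. -/
def IsHomog {σ : Type} [AddCommMonoid σ] (e : X → σ) (α : σ) (f : NC.FA k X) : Prop :=
  ∀ u ∈ f.coeff.support, mdeg e u = α

open Classical in
/-- The degree-`α` homogeneous component of `f`. -/
noncomputable def homComp {σ : Type} [AddCommMonoid σ] (e : X → σ) (α : σ) (f : NC.FA k X) :
    NC.FA k X :=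
  MonoidAlgebra.ofCoeff (Finsupp.filter (fun u => mdeg e u = α) f.coeff)

/-- A homogeneous (two-sided) ideal. -/
def IsHomogIdeal {σ : Type} [AddCommMonoid σ] (e : X → σ) (𝔞 : Submodule k (NC.FA k X)) : Prop :=
  NC.IsTwoSided 𝔞 ∧ ∀ f ∈ 𝔞, ∀ α : σ, homComp e α f ∈ 𝔞

/-- Polynomials supported on a given set of words. -/
noncomputable def wsupported (k : Type) [Field k] {X : Type} (S : Set (FreeMonoid X)) :
    Submodule k (NC.FA k X) :=
  (Finsupp.supported k k S).comap (MonoidAlgebra.coeffLinearEquiv k).toLinearMap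

/-- Dimension of the image, in the quotient by `𝔞`, of the span of the words in `S`. -/
noncomputable def hilbS (𝔞 : Submodule k (NC.FA k X)) (S : Set (FreeMonoid X)) : ℕ :=
  Module.finrank k ↥((wsupported k S).map 𝔞.mkQ)

/-- The multigraded Hilbert function of the quotient algebra `k⟨X⟩/𝔞`. -/
noncomputable def hilb {σ : Type} [AddCommMonoid σ] (e : X → σ) (𝔞 : Submodule k (NC.FA k X))
    (α : σ) : ℕ :=
  hilbS 𝔞 {u | mdeg e u = α}

/-- The monomial ideal on a set of words. -/
noncomputable def monIdeal (k : Type) [Field k] {X : Type} (V : Set (FreeMonoid X)) :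
    Submodule k (NC.FA k X) :=
  NC.ideal2 k ((fun u => NC.mono k u) '' V)

/-- Partial sums of a Hilbert function. -/
def psum (H : ℕ → ℕ) (n : ℕ) : ℕ := ∑ i ∈ Finset.range (n + 1), H i

/-- The growth function is bounded by a polynomial of degree `d`. -/
def PolyBoundedBy (H : ℕ → ℕ) (d : ℕ) : Prop := ∃ C : ℕ, ∀ n, psum H n ≤ C * (n + 1) ^ d

/-- Polynomial growth (of some degree). -/
def PolyGrowth (H : ℕ → ℕ) : Prop := ∃ d, PolyBoundedBy H d

/-- Polynomial growth of degree exactly `d`. -/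
def PolyGrowthDeg (H : ℕ → ℕ) (d : ℕ) : Prop :=
  ∃ C : ℕ, 0 < C ∧ ∀ n, psum H n ≤ C * (n + 1) ^ d ∧ (n + 1) ^ d ≤ C * psum H n

/-- Gelfand-Kirillov dimension of a graded algebra with Hilbert function `H`, as an
extended natural number. -/
noncomputable def gkdimH (H : ℕ → ℕ) : ℕ∞ :=
  sInf ((fun d : ℕ => (d : ℕ∞)) '' {d | PolyBoundedBy H d})

end NC2

namespace NC7
open NC NC2

variable {k X : Type} [Field k]

/-- The multiplication of the twisting algebra `k⟨X⟩^σ` of the free algebra by a graded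
automorphism `σ` (all generators having total degree one):
`f * g = Σ_u f_u · u · σ^{|u|}(g)`. -/
noncomputable def tmul (σ : NC.FA k X ≃ₐ[k] NC.FA k X) (f g : NC.FA k X) : NC.FA k X :=
  Finsupp.sum f.coeff (fun u a => a • (NC.mono k u * (σ ^ (FreeMonoid.toList u).length) g))

/-- The value on a word of the algebra homomorphism `k⟨X⟩ → k⟨X⟩^σ` fixing the
generators. -/
noncomputable def phiW (σ : NC.FA k X ≃ₐ[k] NC.FA k X) : List X → NC.FA k X
  | [] => 1
  | x :: t => tmul σ (NC.mono k (FreeMonoid.of x)) (phiW σ t)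

/-- The algebra homomorphism `φ_σ : k⟨X⟩ → k⟨X⟩^σ` fixing the generators, as a map. -/
noncomputable def phiMap (σ : NC.FA k X ≃ₐ[k] NC.FA k X) (f : NC.FA k X) : NC.FA k X :=
  Finsupp.sum f.coeff (fun u a => a • phiW σ (FreeMonoid.toList u))

/-- `τ` is a graded endomorphism for the grading `e`. -/
def GradedMap {σ : Type} [AddCommMonoid σ] (e : X → σ) (τ : NC.FA k X → NC.FA k X) : Prop :=
  ∀ (α : σ) (f : NC.FA k X), NC2.IsHomog e α f → NC2.IsHomog e α (τ f)

/-- `z` is a normal element modulo the two-sided ideal `𝔞`, i.e. its image in the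
quotient algebra is normal. -/
def NormalMod (𝔞 : Submodule k (NC.FA k X)) (z : NC.FA k X) : Prop :=
  ∀ a : NC.FA k X, (∃ b, z * a - b * z ∈ 𝔞) ∧ (∃ c, a * z - z * c ∈ 𝔞)

end NC7


/-! Write `σ = τ⁻¹` and `⋆` for the product of `k⟨X⟩^τ`. Since every generator has total degree
one, the total degree of a word is its length, i.e. its degree for the grading `(1 : X → ℕ)`, and
a graded automorphism maps letters to linear forms.

The map `φ_σ` sends a word `x₁ x₂ ⋯ xₙ` to `x₁ σ(x₂) ⋯ σⁿ⁻¹(xₙ)`. Because `τ` and `σ` map letters to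
linear forms, `φ_σ` commutes with the powers of `σ`; hence `φ_σ (u ⋆ y) = φ_σ u · φ_σ y`, and
`φ_σ`, `φ_τ` are mutually inverse. So `φ_σ` is an isomorphism of graded algebras
`k⟨X⟩^τ ≅ k⟨X⟩`, and it remains to show that it maps `(G)` onto `(φ_σ(G))`.

`φ_τ (u · φ_σ(g) · v) = φ_τ(u) · τ^|u| (g · τ^|g| (φ_τ v))` lies in `(G)` since `τ((G)) ⊆ (G)`.
Conversely, `τ` is injective on each finite-dimensional homogeneous component of `(G)`, hence
onto it, so `σ((G)) ⊆ (G)`. A homogeneous element of `(G)` is a combination of sandwiches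
`u g v` of the same degree, and `φ_σ (u g v) = φ_σ(u) · φ_σ (σ^|u| (g v))` with `σ^|u| (g v)` in
`(G)` of smaller degree unless `u = 1`; this gives `φ_σ((G)) ⊆ (φ_σ(G))` by induction on the degree.
-/

theorem LinearEquiv.mapsTo_symm_of_finiteDimensional {k V : Type} [Field k] [AddCommGroup V]
    [Module k V] (E : V ≃ₗ[k] V) {S : Submodule k V} [FiniteDimensional k S]
    (h : Set.MapsTo E S S) : Set.MapsTo E.symm S S := by
  have hS : S.map (E : V →ₗ[k] V) = S :=
    Submodule.eq_of_le_of_finrank_eq (Submodule.map_le_iff_le_comap.2 h)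
      (LinearEquiv.finrank_map_eq E S)
  intro x hx
  rw [← hS] at hx
  obtain ⟨y, hy, rfl⟩ := hx
  simpa using hy

namespace NC

variable {k X : Type} [Field k]

lemma mono_mul (u v : FreeMonoid X) : mono k u * mono k v = mono k (u * v) :=
  (map_mul (MonoidAlgebra.of k (FreeMonoid X)) u v).symm

lemma mono_one : mono k (1 : FreeMonoid X) = 1 :=
  map_one (MonoidAlgebra.of k (FreeMonoid X))

lemma sum_smul_mono (f : FA k X) : f.coeff.sum (fun u a => a • mono k u) = f := by
  simp only [mono, MonoidAlgebra.smul_of, MonoidAlgebra.sum_coeff_single]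

@[elab_as_elim]
lemma induction_on_mono {motive : FA k X → Prop} (f : FA k X) (mono : ∀ u, motive (mono k u))
    (add : ∀ f g, motive f → motive g → motive (f + g))
    (smul : ∀ (c : k) f, motive f → motive (c • f)) : motive f :=
  MonoidAlgebra.induction_on f mono add smul

variable {S : Set (FA k X)}

lemma subset_ideal2 : S ⊆ ideal2 k S :=
  fun g hg => Submodule.subset_span ⟨1, g, 1, hg, by rw [one_mul, mul_one]⟩

lemma mul_mem_ideal2_left (a : FA k X) {x : FA k X} (hx : x ∈ ideal2 k S) :
    a * x ∈ ideal2 k S := by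
  induction hx using Submodule.span_induction with
  | mem x hx =>
    obtain ⟨b, g, c, hg, rfl⟩ := hx
    exact Submodule.subset_span ⟨a * b, g, c, hg, by simp only [mul_assoc]⟩
  | zero => simp
  | add x y _ _ hx hy => rw [mul_add]; exact add_mem hx hy
  | smul c x _ hx => rw [mul_smul_comm]; exact Submodule.smul_mem _ c hx

lemma mul_mem_ideal2_right {x : FA k X} (hx : x ∈ ideal2 k S) (b : FA k X) :
    x * b ∈ ideal2 k S := by
  induction hx using Submodule.span_induction with
  | mem x hx =>
    obtain ⟨a, g, c, hg, rfl⟩ := hx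
    exact Submodule.subset_span ⟨a, g, c * b, hg, by simp only [mul_assoc]⟩
  | zero => simp
  | add x y _ _ hx hy => rw [add_mul]; exact add_mem hx hy
  | smul c x _ hx => rw [smul_mul_assoc]; exact Submodule.smul_mem _ c hx

lemma ideal2_eq_span_mono_mul_mul_mono (S : Set (FA k X)) :
    ideal2 k S = Submodule.span k {w | ∃ u g v, g ∈ S ∧ w = mono k u * g * mono k v} := by
  apply le_antisymm
  · rw [ideal2, Submodule.span_le]
    rintro _ ⟨a, g, b, hg, rfl⟩
    induction a using MonoidAlgebra.induction_on with
    | of u =>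
      induction b using MonoidAlgebra.induction_on with
      | of v => exact Submodule.subset_span ⟨u, g, v, hg, rfl⟩
      | add b b' hb hb' => rw [mul_add]; exact add_mem hb hb'
      | smul c b hb => rw [mul_smul_comm]; exact Submodule.smul_mem _ c hb
    | add a a' ha ha' => rw [add_mul, add_mul]; exact add_mem ha ha'
    | smul c a ha => rw [smul_mul_assoc, smul_mul_assoc]; exact Submodule.smul_mem _ c ha
  · rw [Submodule.span_le]
    rintro _ ⟨u, g, v, hg, rfl⟩
    exact mul_mem_ideal2_right (mul_mem_ideal2_left _ (subset_ideal2 hg)) _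

lemma mapsTo_ideal2 {F : Type} [FunLike F (FA k X) (FA k X)] [AlgHomClass F k (FA k X) (FA k X)]
    (π : F) (h : ∀ g ∈ S, π g ∈ ideal2 k S) :
    Set.MapsTo π (ideal2 k S) (ideal2 k S) := by
  intro x hx
  induction hx using Submodule.span_induction with
  | mem x hx =>
    obtain ⟨a, g, b, hg, rfl⟩ := hx
    simp only [map_mul]
    exact mul_mem_ideal2_right (mul_mem_ideal2_left _ (h g hg)) _
  | zero => simp
  | add x y _ _ hx hy => rw [map_add]; exact add_mem hx hy
  | smul c x _ hx => rw [map_smul]; exact Submodule.smul_mem _ c hx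

lemma mul_sub_mul_mem_ideal2 {a a' b b' : FA k X} (ha : a - a' ∈ ideal2 k S)
    (hb : b - b' ∈ ideal2 k S) : a * b - a' * b' ∈ ideal2 k S := by
  have h : a * b - a' * b' = (a - a') * b + a' * (b - b') := by noncomm_ring
  rw [h]
  exact add_mem (mul_mem_ideal2_right ha b) (mul_mem_ideal2_left a' hb)

end NC

namespace NC2

open NC

variable {k X M : Type} [Field k] [AddCommMonoid M]

noncomputable abbrev homog (k : Type) [Field k] {X : Type} (e : X → M) (α : M) :
    Submodule k (FA k X) :=
  wsupported k {u | mdeg e u = α}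

lemma mem_homog {e : X → M} {α : M} {f : FA k X} : f ∈ homog k e α ↔ IsHomog e α f := Iff.rfl

lemma homog_eq_span (e : X → M) (α : M) :
    homog k e α = Submodule.span k (mono k '' {u | mdeg e u = α}) := by
  rw [homog, wsupported, Finsupp.supported_eq_span_single, Submodule.comap_equiv_eq_map_symm,
    Submodule.map_span, ← Set.image_comp]
  rfl

@[simp]
lemma mdeg_mul (e : X → M) (u v : FreeMonoid X) : mdeg e (u * v) = mdeg e u + mdeg e v := by
  simp [mdeg]

@[simp]
lemma mdeg_of (e : X → M) (x : X) : mdeg e (FreeMonoid.of x) = e x := by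
  simp [mdeg]

@[simp]
lemma mdeg_one (e : X → M) : mdeg e (1 : FreeMonoid X) = 0 := rfl

lemma mdeg_one_eq_length (u : FreeMonoid X) : mdeg (1 : X → ℕ) u = u.toList.length := by
  induction u using FreeMonoid.inductionOn' with
  | one => rfl
  | of_mul x u ih => simp [ih, add_comm]

lemma sum_mdeg_eq_mdeg_one {ι : Type} [Fintype ι] {e : X → ι → ℕ} (he : ∀ x, ∑ i, e x i = 1)
    (u : FreeMonoid X) : ∑ i, mdeg e u i = mdeg 1 u := by
  induction u using FreeMonoid.inductionOn' with
  | one => simp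
  | of_mul x u ih => simp [Finset.sum_add_distrib, he, ih]

lemma mono_mem_homog (e : X → M) (u : FreeMonoid X) : mono k u ∈ homog k e (mdeg e u) :=
  Submodule.subset_span ⟨u, rfl, rfl⟩ |> (homog_eq_span e _).ge

lemma mono_of_mem_homog (e : X → M) (x : X) : mono k (FreeMonoid.of x) ∈ homog k e (e x) := by
  simpa using mono_mem_homog (k := k) e (FreeMonoid.of x)

lemma mono_mem_homog_one (u : FreeMonoid X) : mono k u ∈ homog k 1 u.toList.length :=
  mdeg_one_eq_length u ▸ mono_mem_homog 1 u

lemma mul_mem_homog {e : X → M} {α β : M} {f g : FA k X} (hf : f ∈ homog k e α)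
    (hg : g ∈ homog k e β) : f * g ∈ homog k e (α + β) := by
  classical
  rw [mem_homog] at hf hg ⊢
  intro w hw
  obtain ⟨a, ha, b, hb, rfl⟩ := Finset.mem_mul.1 (MonoidAlgebra.support_coeff_mul_subset f g hw)
  rw [mdeg_mul, hf a ha, hg b hb]

lemma homog_le_homog_one {ι : Type} [Fintype ι] {e : X → ι → ℕ} (he : ∀ x, ∑ i, e x i = 1)
    (α : ι → ℕ) : homog k e α ≤ homog k 1 (∑ i, α i) := by
  intro f hf u hu
  rw [mem_homog] at hf
  rw [Set.mem_ofPred_eq, ← sum_mdeg_eq_mdeg_one he, hf u hu]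

lemma finiteDimensional_homog_one [Finite X] (n : ℕ) :
    FiniteDimensional k (homog k (1 : X → ℕ) n) := by
  have hfin : {u : FreeMonoid X | mdeg 1 u = n}.Finite := by
    simp only [mdeg_one_eq_length]
    exact (List.finite_length_eq X n).preimage
      (FreeMonoid.toList.injective.injOn)
  rw [homog_eq_span]
  exact FiniteDimensional.span_of_finite k (hfin.image _)

variable {e : X → M}

lemma homComp_add (α : M) (f g : FA k X) :
    homComp e α (f + g) = homComp e α f + homComp e α g := by
  simp only [homComp, MonoidAlgebra.coeff_add, Finsupp.filter_add, MonoidAlgebra.ofCoeff_add]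

lemma homComp_smul (α : M) (c : k) (f : FA k X) : homComp e α (c • f) = c • homComp e α f := by
  simp only [homComp, MonoidAlgebra.coeff_smul, Finsupp.filter_smul, MonoidAlgebra.ofCoeff_smul]

lemma homComp_zero (α : M) : homComp e α (0 : FA k X) = 0 := by
  simpa using homComp_smul (e := e) α (0 : k) 0

lemma homComp_of_mem_homog {α : M} {f : FA k X} (hf : f ∈ homog k e α) :
    homComp e α f = f := by
  classical
  rw [mem_homog] at hf
  rw [homComp, (Finsupp.filter_eq_self_iff _ _).2 fun u hu => hf u (Finsupp.mem_support_iff.2 hu),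
    MonoidAlgebra.ofCoeff_coeff]

lemma homComp_of_mem_homog_of_ne {α β : M} {f : FA k X} (hf : f ∈ homog k e α) (h : α ≠ β) :
    homComp e β f = 0 := by
  classical
  rw [mem_homog] at hf
  rw [homComp, (Finsupp.filter_eq_zero_iff _ _).2, MonoidAlgebra.ofCoeff_zero]
  intro u hu
  by_contra hne
  exact h (hf u (Finsupp.mem_support_iff.2 hne) ▸ hu)

def homogSandwiches (k : Type) [Field k] (e : X → M) (S : Set (FA k X)) (β : M) :
    Set (FA k X) :=
  {w | ∃ u g v α, g ∈ S ∧ g ∈ homog k e α ∧ mdeg e u + α + mdeg e v = β ∧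
    w = mono k u * g * mono k v}

lemma mem_span_homogSandwiches {S : Set (FA k X)} (hS : ∀ g ∈ S, ∃ α, g ∈ homog k e α)
    {β : M} {z : FA k X} (hz : z ∈ ideal2 k S) (hzβ : z ∈ homog k e β) :
    z ∈ Submodule.span k (homogSandwiches k e S β) := by
  suffices ∀ γ, homComp e γ z ∈ Submodule.span k (homogSandwiches k e S γ) by
    simpa only [homComp_of_mem_homog hzβ] using this β
  intro γ
  clear hzβ
  rw [ideal2_eq_span_mono_mul_mul_mono] at hz
  induction hz using Submodule.span_induction with
  | mem w hw =>
    obtain ⟨u, g, v, hg, rfl⟩ := hw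
    obtain ⟨α, hα⟩ := hS g hg
    have hw : mono k u * g * mono k v ∈ homog k e (mdeg e u + α + mdeg e v) :=
      mul_mem_homog (mul_mem_homog (mono_mem_homog e u) hα) (mono_mem_homog e v)
    by_cases h : mdeg e u + α + mdeg e v = γ
    · rw [homComp_of_mem_homog (h ▸ hw)]
      exact Submodule.subset_span ⟨u, g, v, α, hg, hα, h, rfl⟩
    · rw [homComp_of_mem_homog_of_ne hw h]
      exact zero_mem _
  | zero => rw [homComp_zero]; exact zero_mem _
  | add x y _ _ hx hy => rw [homComp_add]; exact add_mem hx hy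
  | smul c x _ hx => rw [homComp_smul]; exact Submodule.smul_mem _ c hx

end NC2

namespace NC7

open NC NC2

variable {k X : Type} [Field k]

section Graded

variable {M : Type} [AddCommMonoid M] {e : X → M}

lemma gradedMap_of_mono (φ : FA k X →ₗ[k] FA k X)
    (h : ∀ u, φ (mono k u) ∈ homog k e (mdeg e u)) : GradedMap e ⇑φ := by
  intro α f hf
  have hle : Submodule.span k (mono k '' {u | mdeg e u = α}) ≤ (homog k e α).comap φ := by
    rw [Submodule.span_le]
    rintro _ ⟨u, rfl, rfl⟩
    exact h u
  exact hle ((homog_eq_span e α).le hf)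

lemma gradedMap_of_mono_of {F : Type} [FunLike F (FA k X) (FA k X)]
    [AlgHomClass F k (FA k X) (FA k X)] {π : F}
    (h : ∀ x, π (mono k (FreeMonoid.of x)) ∈ homog k e (e x)) : GradedMap e ⇑π := by
  have hmono : ∀ u, π (mono k u) ∈ homog k e (mdeg e u) := by
    intro u
    induction u using FreeMonoid.inductionOn' with
    | one => rw [mono_one, map_one, ← mono_one]; exact mono_mem_homog e 1
    | of_mul x u ih =>
      rw [← mono_mul, map_mul, mdeg_mul, mdeg_of]
      exact mul_mem_homog (h x) ih
  exact gradedMap_of_mono (π : FA k X →ₗ[k] FA k X) hmono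

lemma gradedMap_one_of_gradedMap {ι : Type} [Fintype ι] {e : X → ι → ℕ}
    (he : ∀ x, ∑ i, e x i = 1) {τ : FA k X ≃ₐ[k] FA k X} (hτ : GradedMap e ⇑τ) :
    GradedMap (1 : X → ℕ) ⇑τ := by
  refine gradedMap_of_mono_of fun x => ?_
  have h := homog_le_homog_one (k := k) he (e x) (hτ _ _ (mono_of_mem_homog e x))
  rwa [he x] at h

lemma gradedMap_symm [Finite X] {τ : FA k X ≃ₐ[k] FA k X} (hτ₁ : GradedMap (1 : X → ℕ) ⇑τ)
    (hτ : GradedMap e ⇑τ) : GradedMap e ⇑τ.symm := by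
  refine gradedMap_of_mono_of fun x => ?_
  let S := homog k (1 : X → ℕ) 1 ⊓ homog k e (e x)
  have := finiteDimensional_homog_one (k := k) (X := X) 1
  have : FiniteDimensional k S := Submodule.finiteDimensional_of_le inf_le_left
  have hS : Set.MapsTo τ.toLinearEquiv S S := fun f hf => ⟨hτ₁ _ _ hf.1, hτ _ _ hf.2⟩
  have hx : mono k (FreeMonoid.of x) ∈ S := ⟨mono_of_mem_homog 1 x, mono_of_mem_homog e x⟩
  exact (LinearEquiv.mapsTo_symm_of_finiteDimensional τ.toLinearEquiv hS hx).2

lemma gradedMap_pow {ρ : FA k X ≃ₐ[k] FA k X}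
    (hρ : GradedMap e ⇑ρ) (n : ℕ) : GradedMap e ⇑(ρ ^ n) := by
  intro α f hf
  rw [AlgEquiv.coe_pow]
  induction n with
  | zero => exact hf
  | succ n ih => rw [Function.iterate_succ_apply']; exact hρ α _ ih

lemma symm_pow_apply_pow_apply (ρ : FA k X ≃ₐ[k] FA k X) (n : ℕ) (f : FA k X) :
    (ρ.symm ^ n) ((ρ ^ n) f) = f := by
  rw [AlgEquiv.coe_pow, AlgEquiv.coe_pow]
  exact Function.LeftInverse.iterate ρ.symm_apply_apply n f

end Graded

variable (ρ : FA k X ≃ₐ[k] FA k X)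

noncomputable def phiL : FA k X →ₗ[k] FA k X :=
  Finsupp.linearCombination k (fun u : FreeMonoid X => phiW ρ u.toList) ∘ₗ
    (MonoidAlgebra.coeffLinearEquiv k).toLinearMap

lemma coe_phiL : ⇑(phiL ρ) = phiMap ρ := rfl

lemma tmul_of_mem_homog_one {n : ℕ} {f : FA k X} (hf : f ∈ homog k 1 n) (g : FA k X) :
    tmul ρ f g = f * (ρ ^ n) g := by
  rw [mem_homog] at hf
  calc tmul ρ f g = f.coeff.sum (fun u a => a • (mono k u * (ρ ^ n) g)) :=
        Finsupp.sum_congr fun u hu => by rw [← mdeg_one_eq_length, hf u hu]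
    _ = f.coeff.sum (fun u a => a • mono k u) * (ρ ^ n) g := by
        rw [Finsupp.sum_mul]; simp only [smul_mul_assoc]
    _ = f * (ρ ^ n) g := by rw [sum_smul_mono]

lemma phiW_cons (x : X) (l : List X) :
    phiW ρ (x :: l) = mono k (FreeMonoid.of x) * ρ (phiW ρ l) := by
  rw [phiW, tmul_of_mem_homog_one ρ (mono_mem_homog_one _), FreeMonoid.toList_of,
    List.length_singleton, pow_one]

lemma phiL_mono (u : FreeMonoid X) : phiL ρ (mono k u) = phiW ρ u.toList := by
  simp [phiL, mono]

lemma phiL_one : phiL ρ (1 : FA k X) = 1 := by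
  rw [← mono_one, phiL_mono]
  rfl

lemma phiL_of_mul (x : X) (y : FA k X) :
    phiL ρ (mono k (FreeMonoid.of x) * y) = mono k (FreeMonoid.of x) * ρ (phiL ρ y) := by
  induction y using induction_on_mono with
  | mono w => rw [mono_mul, phiL_mono, phiL_mono, FreeMonoid.toList_of_mul, phiW_cons]
  | add f g hf hg => rw [mul_add, map_add, map_add, map_add, hf, hg, mul_add]
  | smul c f hf => rw [mul_smul_comm, map_smul, map_smul, map_smul, hf, mul_smul_comm]

lemma phiL_mono_mul (u : FreeMonoid X) (y : FA k X) :
    phiL ρ (mono k u * y) = phiL ρ (mono k u) * (ρ ^ u.toList.length) (phiL ρ y) := by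
  induction u using FreeMonoid.inductionOn' with
  | one => simp [mono_one, phiL_one]
  | of_mul x u ih =>
    rw [← mono_mul, mul_assoc, phiL_of_mul, ih, phiL_of_mul, map_mul, mul_assoc,
      FreeMonoid.toList_of_mul, List.length_cons, pow_succ', AlgEquiv.mul_apply]

lemma phiL_mul_of_mem_homog_one {n : ℕ} {h : FA k X} (hh : h ∈ homog k 1 n) (y : FA k X) :
    phiL ρ (h * y) = phiL ρ h * (ρ ^ n) (phiL ρ y) := by
  rw [homog_eq_span] at hh
  induction hh using Submodule.span_induction with
  | mem w hw =>
    obtain ⟨u, hu, rfl⟩ := hw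
    rw [phiL_mono_mul, ← mdeg_one_eq_length, hu]
  | zero => simp
  | add f g _ _ hf hg => rw [add_mul, map_add, hf, hg, map_add, add_mul]
  | smul c f _ hf => rw [smul_mul_assoc, map_smul, hf, map_smul, smul_mul_assoc]

lemma phiL_of_mem_homog_one_one {h : FA k X} (hh : h ∈ homog k 1 1) : phiL ρ h = h := by
  rw [homog_eq_span] at hh
  induction hh using Submodule.span_induction with
  | mem w hw =>
    obtain ⟨u, hu, rfl⟩ := hw
    rw [Set.mem_ofPred_eq, mdeg_one_eq_length, List.length_eq_one_iff] at hu
    obtain ⟨x, hx⟩ := hu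
    obtain rfl : u = FreeMonoid.of x := FreeMonoid.toList.injective hx
    simpa [phiL_one] using phiL_of_mul ρ x 1
  | zero => simp
  | add f g _ _ hf hg => rw [map_add, hf, hg]
  | smul c f _ hf => rw [map_smul, hf]

lemma phiL_comm {π : FA k X ≃ₐ[k] FA k X} (hπ : GradedMap (1 : X → ℕ) ⇑π)
    (hcomm : ∀ y, π (ρ y) = ρ (π y)) (f : FA k X) : π (phiL ρ f) = phiL ρ (π f) := by
  induction f using induction_on_mono with
  | mono u =>
    induction u using FreeMonoid.inductionOn' with
    | one => rw [mono_one, phiL_one, map_one, phiL_one]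
    | of_mul x u ih =>
      have hx : π (mono k (FreeMonoid.of x)) ∈ homog k 1 1 := hπ 1 _ (mono_mem_homog_one _)
      rw [← mono_mul, phiL_of_mul, map_mul, map_mul, hcomm, ih,
        phiL_mul_of_mem_homog_one ρ hx, pow_one, phiL_of_mem_homog_one_one ρ hx]
  | add f g hf hg => rw [map_add, map_add, hf, hg, map_add, map_add]
  | smul c f hf => rw [map_smul, map_smul, hf, map_smul, map_smul]

lemma phiL_mul_eq_mul_phiL_pow (hρ : GradedMap (1 : X → ℕ) ⇑ρ) {n : ℕ} {h : FA k X}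
    (hh : h ∈ homog k 1 n) (y : FA k X) : phiL ρ (h * y) = phiL ρ h * phiL ρ ((ρ ^ n) y) := by
  rw [phiL_mul_of_mem_homog_one ρ hh, phiL_comm ρ (gradedMap_pow hρ n)]
  intro y
  rw [← AlgEquiv.mul_apply, ← AlgEquiv.mul_apply, ← pow_succ, ← pow_succ']

lemma phiL_symm_phiL (hρ : GradedMap (1 : X → ℕ) ⇑ρ) (f : FA k X) :
    phiL ρ.symm (phiL ρ f) = f := by
  induction f using induction_on_mono with
  | mono u =>
    induction u using FreeMonoid.inductionOn' with
    | one => rw [mono_one, phiL_one, phiL_one]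
    | of_mul x u ih =>
      rw [← mono_mul, phiL_of_mul, phiL_of_mul, ← phiL_comm ρ.symm hρ (by simp), ih,
        AlgEquiv.symm_apply_apply]
  | add f g hf hg => rw [map_add, map_add, hf, hg]
  | smul c f hf => rw [map_smul, map_smul, hf]

lemma gradedMap_phiL {M : Type} [AddCommMonoid M] {e : X → M} (hρ : GradedMap e ⇑ρ) :
    GradedMap e ⇑(phiL ρ) := by
  refine gradedMap_of_mono _ fun u => ?_
  induction u using FreeMonoid.inductionOn' with
  | one => rw [mono_one, phiL_one, ← mono_one]; exact mono_mem_homog e 1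
  | of_mul x u ih =>
    rw [← mono_mul, phiL_of_mul, mdeg_mul, mdeg_of]
    exact mul_mem_homog (mono_of_mem_homog e x) (hρ _ _ ih)

section Ideal

variable {τ : FA k X ≃ₐ[k] FA k X} {G : Set (FA k X)}

lemma phiL_tmul (hσ : GradedMap (1 : X → ℕ) ⇑τ.symm) (f g : FA k X) :
    phiL τ.symm (tmul τ f g) = phiL τ.symm f * phiL τ.symm g := by
  calc phiL τ.symm (tmul τ f g)
        = f.coeff.sum (fun u a => a • (phiL τ.symm (mono k u) * phiL τ.symm g)) := by
        rw [tmul, map_finsuppSum]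
        refine Finsupp.sum_congr fun u _ => ?_
        rw [map_smul, phiL_mul_eq_mul_phiL_pow _ hσ (mono_mem_homog_one u),
          symm_pow_apply_pow_apply]
    _ = f.coeff.sum (fun u a => a • phiL τ.symm (mono k u)) * phiL τ.symm g := by
        rw [Finsupp.sum_mul]; simp only [smul_mul_assoc]
    _ = phiL τ.symm f * phiL τ.symm g := by
        simp only [← map_smul, ← map_finsuppSum, sum_smul_mono]

lemma symm_pow_mem_ideal2_inf_homog [Finite X] (hτ : GradedMap (1 : X → ℕ) ⇑τ)
    (hτG : ∀ g ∈ G, τ g ∈ ideal2 k G) (m : ℕ) {n : ℕ} {z : FA k X} (hz : z ∈ ideal2 k G)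
    (hzn : z ∈ homog k 1 n) : (τ.symm ^ m) z ∈ ideal2 k G ⊓ homog k 1 n := by
  let S := ideal2 k G ⊓ homog k 1 n
  have := finiteDimensional_homog_one (k := k) (X := X) n
  have : FiniteDimensional k S := Submodule.finiteDimensional_of_le inf_le_right
  have hS : Set.MapsTo τ.toLinearEquiv S S :=
    fun f hf => ⟨mapsTo_ideal2 τ hτG hf.1, hτ n f hf.2⟩
  rw [AlgEquiv.coe_pow]
  exact (LinearEquiv.mapsTo_symm_of_finiteDimensional _ hS).iterate m ⟨hz, hzn⟩

lemma phiL_symm_mem_ideal2_of_mem_homog [Finite X] (hτ : GradedMap (1 : X → ℕ) ⇑τ)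
    (hσ : GradedMap (1 : X → ℕ) ⇑τ.symm) (hG : ∀ g ∈ G, ∃ n, g ∈ homog k (1 : X → ℕ) n)
    (hτG : ∀ g ∈ G, τ g ∈ ideal2 k G) (n : ℕ) {z : FA k X} (hz : z ∈ ideal2 k G)
    (hzn : z ∈ homog k 1 n) : phiL τ.symm z ∈ ideal2 k (phiL τ.symm '' G) := by
  induction n using Nat.strong_induction_on generalizing z with
  | _ n ih =>
  have hspan := mem_span_homogSandwiches hG hz hzn
  clear hz hzn
  induction hspan using Submodule.span_induction with
  | mem w hw =>
    obtain ⟨u, g, v, d, hg, hgd, hlen, rfl⟩ := hw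
    rw [mdeg_one_eq_length] at hlen
    rcases u.toList.length.eq_zero_or_pos with hu | hu
    · obtain rfl : u = 1 := FreeMonoid.toList.injective (List.length_eq_zero_iff.1 hu)
      rw [mono_one, one_mul, phiL_mul_eq_mul_phiL_pow _ hσ hgd]
      exact mul_mem_ideal2_right (subset_ideal2 (Set.mem_image_of_mem _ hg)) _
    · rw [mul_assoc, phiL_mul_eq_mul_phiL_pow _ hσ (mono_mem_homog_one u)]
      obtain ⟨h₁, h₂⟩ := symm_pow_mem_ideal2_inf_homog hτ hτG u.toList.length
        (mul_mem_ideal2_right (subset_ideal2 hg) (mono k v))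
        (mul_mem_homog hgd (mono_mem_homog 1 v))
      exact mul_mem_ideal2_left _ (ih _ (by omega) h₁ h₂)
  | zero => rw [map_zero]; exact zero_mem _
  | add x y _ _ hx hy => rw [map_add]; exact add_mem hx hy
  | smul c x _ hx => rw [map_smul]; exact Submodule.smul_mem _ c hx

lemma phiL_mem_ideal2_of_mem (hσ : GradedMap (1 : X → ℕ) ⇑τ.symm)
    (hG : ∀ g ∈ G, ∃ n, g ∈ homog k (1 : X → ℕ) n) (hτG : ∀ g ∈ G, τ g ∈ ideal2 k G)
    {z : FA k X} (hz : z ∈ ideal2 k (phiL τ.symm '' G)) : phiL τ z ∈ ideal2 k G := by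
  rw [ideal2_eq_span_mono_mul_mul_mono] at hz
  induction hz using Submodule.span_induction with
  | mem w hw =>
    obtain ⟨u, _, v, ⟨g, hg, rfl⟩, rfl⟩ := hw
    obtain ⟨d, hgd⟩ := hG g hg
    have hg' : phiL τ (phiL τ.symm g) = g := by simpa using phiL_symm_phiL τ.symm hσ g
    rw [mul_assoc, phiL_mul_of_mem_homog_one τ (mono_mem_homog_one u),
      phiL_mul_of_mem_homog_one τ (gradedMap_phiL τ.symm hσ d g hgd), hg', AlgEquiv.coe_pow]
    exact mul_mem_ideal2_left _
      ((mapsTo_ideal2 τ hτG).iterate _ (mul_mem_ideal2_right (subset_ideal2 hg) _))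
  | zero => rw [map_zero]; exact zero_mem _
  | add x y _ _ hx hy => rw [map_add]; exact add_mem hx hy
  | smul c x _ hx => rw [map_smul]; exact Submodule.smul_mem _ c hx

variable (τ) in
noncomputable def phiLEquiv (hτ : GradedMap (1 : X → ℕ) ⇑τ)
    (hσ : GradedMap (1 : X → ℕ) ⇑τ.symm) : FA k X ≃ₗ[k] FA k X :=
  { phiL τ.symm with
    invFun := phiL τ
    left_inv := fun f => by simpa using phiL_symm_phiL τ.symm hσ f
    right_inv := phiL_symm_phiL τ hτ }

lemma map_phiLEquiv_ideal2 [Finite X] (hτ : GradedMap (1 : X → ℕ) ⇑τ)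
    (hσ : GradedMap (1 : X → ℕ) ⇑τ.symm) (hG : ∀ g ∈ G, ∃ n, g ∈ homog k (1 : X → ℕ) n)
    (hτG : ∀ g ∈ G, τ g ∈ ideal2 k G) :
    (ideal2 k G).map (phiLEquiv τ hτ hσ : FA k X →ₗ[k] FA k X) = ideal2 k (phiL τ.symm '' G) := by
  apply le_antisymm
  · rw [Submodule.map_le_iff_le_comap, ideal2_eq_span_mono_mul_mul_mono G, Submodule.span_le]
    rintro _ ⟨u, g, v, hg, rfl⟩
    obtain ⟨d, hgd⟩ := hG g hg
    exact phiL_symm_mem_ideal2_of_mem_homog hτ hσ hG hτG _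
      (mul_mem_ideal2_right (mul_mem_ideal2_left _ (subset_ideal2 hg)) _)
      (mul_mem_homog (mul_mem_homog (mono_mem_homog 1 u) hgd) (mono_mem_homog 1 v))
  · intro z hz
    exact ⟨phiL τ z, phiL_mem_ideal2_of_mem hσ hG hτG hz, phiL_symm_phiL τ hτ z⟩

end Ideal

end NC7

open NC NC2 NC7 in
/-- let `k⟨X⟩` be `ℤ^s`-graded with every generator of total degree `1`,
`G` a set of homogeneous polynomials, `A = k⟨X⟩/(G)`, and `τ` a graded algebra
automorphism of `k⟨X⟩` with `τ(G) ⊆ (G)`.  Then the twisted algebra `A^τ̄` is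
isomorphic, as a `ℤ^s`-graded algebra, to `k⟨X⟩/(φ_{τ⁻¹}(G))` (the twisted product of
the classes of `f` and `g` in `A^τ̄` being the class of `tmul τ f g`). -/
theorem stmt_10 (k X : Type) [Field k] [Finite X] (s : ℕ)
    (e : X → Fin s → ℕ) (he : ∀ x, ∑ i, e x i = 1)
    (G : Set (NC.FA k X)) (hGhom : ∀ g ∈ G, ∃ α, NC2.IsHomog e α g)
    (τ : NC.FA k X ≃ₐ[k] NC.FA k X) (hτgr : NC7.GradedMap e ⇑τ)
    (hτG : ∀ g ∈ G, τ g ∈ NC.ideal2 k G) :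
    ∃ ψ : (NC.FA k X ⧸ NC.ideal2 k G) ≃ₗ[k]
        (NC.FA k X ⧸ NC.ideal2 k (NC7.phiMap τ.symm '' G)),
      ψ ((NC.ideal2 k G).mkQ 1) = (NC.ideal2 k (NC7.phiMap τ.symm '' G)).mkQ 1 ∧
      (∀ f g f' g' : NC.FA k X,
        ψ ((NC.ideal2 k G).mkQ f) = (NC.ideal2 k (NC7.phiMap τ.symm '' G)).mkQ f' →
        ψ ((NC.ideal2 k G).mkQ g) = (NC.ideal2 k (NC7.phiMap τ.symm '' G)).mkQ g' →
        ψ ((NC.ideal2 k G).mkQ (NC7.tmul τ f g)) =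
          (NC.ideal2 k (NC7.phiMap τ.symm '' G)).mkQ (f' * g')) ∧
      (∀ (α : Fin s → ℕ) (f : NC.FA k X), NC2.IsHomog e α f →
        ∃ f', NC2.IsHomog e α f' ∧
          ψ ((NC.ideal2 k G).mkQ f) = (NC.ideal2 k (NC7.phiMap τ.symm '' G)).mkQ f') := by
  have hτ₁ : GradedMap (1 : X → ℕ) ⇑τ := gradedMap_one_of_gradedMap he hτgr
  have hσ₁ : GradedMap (1 : X → ℕ) ⇑τ.symm := gradedMap_symm hτ₁ hτ₁
  have hG : ∀ g ∈ G, ∃ n, g ∈ homog k (1 : X → ℕ) n :=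
    fun g hg => (hGhom g hg).elim fun α hα => ⟨_, homog_le_homog_one he α hα⟩
  rw [← coe_phiL]
  let ψ := Submodule.Quotient.equiv _ _ (phiLEquiv τ hτ₁ hσ₁) (map_phiLEquiv_ideal2 hτ₁ hσ₁ hG hτG)
  have hψ : ∀ f, ψ ((ideal2 k G).mkQ f) = (ideal2 k (phiL τ.symm '' G)).mkQ (phiL τ.symm f) :=
    fun _ => rfl
  refine ⟨ψ, by rw [hψ, phiL_one], fun f g f' g' hf hg => ?_, fun α f hf =>
    ⟨_, gradedMap_phiL τ.symm (gradedMap_symm hτ₁ hτgr) α f hf, hψ f⟩⟩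
  rw [hψ, Submodule.mkQ_apply, Submodule.mkQ_apply, Submodule.Quotient.eq] at hf hg ⊢
  rw [phiL_tmul hσ₁]
  exact mul_sub_mul_mem_ideal2 hf hg
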